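/- If a > 0 satisfies a^k = 1 + a + a² + ... + a^{k-1} for some integer k ≥ 1, then for all x > a, x^k > 1 + x + x² + ... + x^{k-1}. -/

import Mathlib

/-!
Dividing by `x ^ k`, the claim says `∑_{j=1}^{k} x⁻ʲ < 1`. The left side is strictly decreasing
in `x > 0` and equals `1` at `x = a`; after clearing denominators, the decrease is the termwise
inequality `x ^ i * a ^ k < a ^ i * x ^ k` for `i < k`.
-/

open Finset

variable {R : Type*} [CommSemiring R] [LinearOrder R] [IsStrictOrderedRing R]

theorem pow_mul_pow_lt_pow_mul_pow {a x : R} (ha : 0 < a) (hax : a < x) {i k : ℕ} (hik : i < k) :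
    x ^ i * a ^ k < a ^ i * x ^ k := by
  obtain ⟨m, rfl⟩ := Nat.exists_eq_add_of_lt hik
  have hx : 0 < x := ha.trans hax
  calc x ^ i * a ^ (i + m + 1) = (x ^ i * a ^ i) * a ^ (m + 1) := by ring
    _ < (x ^ i * a ^ i) * x ^ (m + 1) := by
      gcongr
    _ = a ^ i * x ^ (i + m + 1) := by ring

theorem sum_range_pow_mul_pow_lt {a x : R} (ha : 0 < a) (hax : a < x) {k : ℕ} (hk : k ≠ 0) :
    (∑ i ∈ range k, x ^ i) * a ^ k < (∑ i ∈ range k, a ^ i) * x ^ k := by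
  rw [sum_mul, sum_mul]
  exact sum_lt_sum_of_nonempty (nonempty_range_iff.mpr hk) fun i hi ↦
    pow_mul_pow_lt_pow_mul_pow ha hax (mem_range.mp hi)

theorem growth_beyond_root (k : ℕ) (hk : 1 ≤ k) (a : ℝ) (ha : 0 < a)
    (hroot : a ^ k = ∑ i ∈ Finset.range k, a ^ i) :
    ∀ x : ℝ, a < x → (∑ i ∈ Finset.range k, x ^ i) < x ^ k := by
  intro x hax
  have key := sum_range_pow_mul_pow_lt ha hax (Nat.one_le_iff_ne_zero.mp hk)
  rw [← hroot, mul_comm (a ^ k)] at key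
  exact lt_of_mul_lt_mul_right key (pow_pos ha k).le
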